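/- Let R > 0, m ≥ 1, and let ã be a positive harmonic function on the ball B_R ⊆ ℝ^m; set a := 1/ã. Suppose b, c : B_R → ℝ are smooth and satisfy a·Δb = 2∇a·∇b and 2a·Δc = |∇b|² + 1 on B_R. Then u(t,x) := a(x)t² + b(x)t + c(x) is a smooth solution of Donaldson's equation u_tt·Δu − |∇u_t|² = 1 on ℝ × B_R. -/

import Mathlib

open scoped RealInnerProductSpace

noncomputable section

/-- The Laplacian of `f : ℝ^m → ℝ`, as the sum of second partial derivatives. -/
def lap {m : ℕ} (f : EuclideanSpace ℝ (Fin m) → ℝ) (x : EuclideanSpace ℝ (Fin m)) : ℝ :=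
  ∑ i, fderiv ℝ (fderiv ℝ f) x (EuclideanSpace.single i 1) (EuclideanSpace.single i 1)

/-- Donaldson's operator `u_tt Δu − |∇u_t|²`, where the Laplacian and gradient are in
the space variable `x` only and subscripts `t` denote derivatives in `t`. -/
def donaldsonOp {m : ℕ} (u : ℝ × EuclideanSpace ℝ (Fin m) → ℝ)
    (p : ℝ × EuclideanSpace ℝ (Fin m)) : ℝ :=
  fderiv ℝ (fun q => fderiv ℝ u q (1, 0)) p (1, 0) * lap (fun y => u (p.1, y)) p.2
    - ‖gradient (fun y => fderiv ℝ u (p.1, y) (1, 0)) p.2‖ ^ 2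

section helpers

variable {m : ℕ}

lemma inner_grad (f : EuclideanSpace ℝ (Fin m) → ℝ) (x v : EuclideanSpace ℝ (Fin m)) :
    ⟪gradient f x, v⟫ = fderiv ℝ f x v := by
  simp [gradient, InnerProductSpace.toDual_symm_apply]

lemma inner_sum_coords (u v : EuclideanSpace ℝ (Fin m)) :
    ⟪u, v⟫ = ∑ i, ⟪u, EuclideanSpace.single i 1⟫ * ⟪v, EuclideanSpace.single i 1⟫ := by
  have h := (EuclideanSpace.basisFun (Fin m) ℝ).sum_inner_mul_inner u v
  simp only [EuclideanSpace.basisFun_apply] at h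
  rw [← h]
  refine Finset.sum_congr rfl fun i _ => ?_
  rw [real_inner_comm (EuclideanSpace.single i 1) v]

lemma norm_sq_coords (w : EuclideanSpace ℝ (Fin m)) :
    ‖w‖ ^ 2 = ∑ i, ⟪w, EuclideanSpace.single i 1⟫ ^ 2 := by
  rw [← real_inner_self_eq_norm_sq, inner_sum_coords]
  exact Finset.sum_congr rfl fun i _ => (sq _).symm

lemma lap_congr_on {f g : EuclideanSpace ℝ (Fin m) → ℝ} {s : Set (EuclideanSpace ℝ (Fin m))}
    (hs : IsOpen s) (hfg : ∀ y ∈ s, f y = g y) {x} (hx : x ∈ s) : lap f x = lap g x := by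
  have h1 : ∀ y ∈ s, fderiv ℝ f y = fderiv ℝ g y := fun y hy =>
    Filter.EventuallyEq.fderiv_eq (Filter.eventuallyEq_of_mem (hs.mem_nhds hy) hfg)
  have h2 : fderiv ℝ (fderiv ℝ f) x = fderiv ℝ (fderiv ℝ g) x :=
    Filter.EventuallyEq.fderiv_eq (Filter.eventuallyEq_of_mem (hs.mem_nhds hx) h1)
  simp [lap, h2]

end helpers

set_option maxHeartbeats 1000000 in
/-- if `ã` is a positive harmonic function on `B_R`, `a := 1/ã`, and
`b, c` smooth solve `aΔb = 2∇a·∇b` and `2aΔc = |∇b|² + 1` on `B_R`, then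
`u(t,x) = a(x)t² + b(x)t + c(x)` is a smooth solution of Donaldson's equation
`u_tt Δu − |∇u_t|² = 1` on `ℝ × B_R`. -/
theorem stmt12 {m : ℕ} (hm : 1 ≤ m) (R : ℝ) (hR : 0 < R)
    (ta : EuclideanSpace ℝ (Fin m) → ℝ)
    (hta : ContDiffOn ℝ (⊤ : ℕ∞) ta (Metric.ball (0 : EuclideanSpace ℝ (Fin m)) R))
    (htapos : ∀ x ∈ Metric.ball (0 : EuclideanSpace ℝ (Fin m)) R, 0 < ta x)
    (htaharm : ∀ x ∈ Metric.ball (0 : EuclideanSpace ℝ (Fin m)) R, lap ta x = 0)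
    (a b c : EuclideanSpace ℝ (Fin m) → ℝ)
    (haa : a = fun x => 1 / ta x)
    (hb : ContDiffOn ℝ (⊤ : ℕ∞) b (Metric.ball (0 : EuclideanSpace ℝ (Fin m)) R))
    (hc : ContDiffOn ℝ (⊤ : ℕ∞) c (Metric.ball (0 : EuclideanSpace ℝ (Fin m)) R))
    (hbeq : ∀ x ∈ Metric.ball (0 : EuclideanSpace ℝ (Fin m)) R,
      a x * lap b x = 2 * ⟪gradient a x, gradient b x⟫)
    (hceq : ∀ x ∈ Metric.ball (0 : EuclideanSpace ℝ (Fin m)) R,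
      2 * a x * lap c x = ‖gradient b x‖ ^ 2 + 1)
    (u : ℝ × EuclideanSpace ℝ (Fin m) → ℝ)
    (hu : u = fun p => a p.2 * p.1 ^ 2 + b p.2 * p.1 + c p.2) :
    ContDiffOn ℝ (⊤ : ℕ∞) u
      (Set.univ ×ˢ Metric.ball (0 : EuclideanSpace ℝ (Fin m)) R) ∧
    ∀ t : ℝ, ∀ x ∈ Metric.ball (0 : EuclideanSpace ℝ (Fin m)) R,
      donaldsonOp u (t, x) = 1 := by
  set s : Set (EuclideanSpace ℝ (Fin m)) := Metric.ball (0 : EuclideanSpace ℝ (Fin m)) R with hsdef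
  have hs : IsOpen s := hsdef ▸ Metric.isOpen_ball
  have hane : ∀ y ∈ s, ta y ≠ 0 := fun y hy => (htapos y hy).ne'
  -- smoothness of a
  have ha : ContDiffOn ℝ (⊤ : ℕ∞) a s := by
    rw [haa]; exact contDiffOn_const.div hta hane
  -- basic differentiability facts
  have hda : ∀ y ∈ s, DifferentiableAt ℝ a y := fun y hy =>
    ((ha.differentiableOn (by simp)).differentiableAt (hs.mem_nhds hy))
  have hdb : ∀ y ∈ s, DifferentiableAt ℝ b y := fun y hy =>
    ((hb.differentiableOn (by simp)).differentiableAt (hs.mem_nhds hy))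
  have hdc : ∀ y ∈ s, DifferentiableAt ℝ c y := fun y hy =>
    ((hc.differentiableOn (by simp)).differentiableAt (hs.mem_nhds hy))
  have hdta : ∀ y ∈ s, DifferentiableAt ℝ ta y := fun y hy =>
    ((hta.differentiableOn (by simp)).differentiableAt (hs.mem_nhds hy))
  have hDa : ∀ y ∈ s, DifferentiableAt ℝ (fderiv ℝ a) y := fun y hy =>
    (((ha.fderiv_of_isOpen (m := ((⊤:ℕ∞) : WithTop ℕ∞)) hs (le_of_eq rfl)).differentiableOn (by simp)).differentiableAt (hs.mem_nhds hy))
  have hDb : ∀ y ∈ s, DifferentiableAt ℝ (fderiv ℝ b) y := fun y hy =>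
    (((hb.fderiv_of_isOpen (m := ((⊤:ℕ∞) : WithTop ℕ∞)) hs (le_of_eq rfl)).differentiableOn (by simp)).differentiableAt (hs.mem_nhds hy))
  have hDc : ∀ y ∈ s, DifferentiableAt ℝ (fderiv ℝ c) y := fun y hy =>
    (((hc.fderiv_of_isOpen (m := ((⊤:ℕ∞) : WithTop ℕ∞)) hs (le_of_eq rfl)).differentiableOn (by simp)).differentiableAt (hs.mem_nhds hy))
  have hDta : ∀ y ∈ s, DifferentiableAt ℝ (fderiv ℝ ta) y := fun y hy =>
    (((hta.fderiv_of_isOpen (m := ((⊤:ℕ∞) : WithTop ℕ∞)) hs (le_of_eq rfl)).differentiableOn (by simp)).differentiableAt (hs.mem_nhds hy))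
  constructor
  · -- smoothness of u
    rw [hu]
    have hsnd : ContDiffOn ℝ (⊤ : ℕ∞) (fun p : ℝ × (EuclideanSpace ℝ (Fin m)) => p.2) (Set.univ ×ˢ s) :=
      contDiff_snd.contDiffOn
    have hmt : Set.MapsTo (fun p : ℝ × (EuclideanSpace ℝ (Fin m)) => p.2) (Set.univ ×ˢ s) s := fun p hp => hp.2
    have h1 : ContDiffOn ℝ (⊤ : ℕ∞) (fun p : ℝ × (EuclideanSpace ℝ (Fin m)) => a p.2) (Set.univ ×ˢ s) :=
      ha.comp hsnd hmt
    have h2 : ContDiffOn ℝ (⊤ : ℕ∞) (fun p : ℝ × (EuclideanSpace ℝ (Fin m)) => b p.2) (Set.univ ×ˢ s) :=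
      hb.comp hsnd hmt
    have h3 : ContDiffOn ℝ (⊤ : ℕ∞) (fun p : ℝ × (EuclideanSpace ℝ (Fin m)) => c p.2) (Set.univ ×ˢ s) :=
      hc.comp hsnd hmt
    exact ((h1.mul ((contDiff_fst.pow 2).contDiffOn)).add (h2.mul contDiff_fst.contDiffOn)).add h3

  intro t x hx
  have hgne : ta x ≠ 0 := hane x hx
  -- first derivative of a on s
  have hfa : ∀ y ∈ s, HasFDerivAt a ((-((ta y) ^ 2)⁻¹) • fderiv ℝ ta y) y := by
    intro y hy
    have h1 := (hasDerivAt_inv (hane y hy)).comp_hasFDerivAt y (hdta y hy).hasFDerivAt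
    have h2 : a = fun z => (ta z)⁻¹ := by rw [haa]; funext z; rw [one_div]
    rw [h2]; exact h1
  have hfa' : ∀ y ∈ s, fderiv ℝ a y = (-((ta y) ^ 2)⁻¹) • fderiv ℝ ta y :=
    fun y hy => (hfa y hy).fderiv
  -- second derivative of a at x
  have hphi : HasFDerivAt (fun y => -((ta y) ^ 2)⁻¹)
      ((2 * ta x / ((ta x) ^ 2) ^ 2) • fderiv ℝ ta x) x := by
    have h1 : HasDerivAt (fun r : ℝ => -(r ^ 2)⁻¹) (2 * ta x / ((ta x) ^ 2) ^ 2) (ta x) := by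
      have hp : HasDerivAt (fun r : ℝ => r ^ 2) (2 * ta x) (ta x) := by
        simpa using hasDerivAt_pow 2 (ta x)
      have h2 := (hp.fun_inv (pow_ne_zero 2 hgne)).fun_neg
      rw [show 2 * ta x / ((ta x) ^ 2) ^ 2 = -(-(2 * ta x) / ((ta x) ^ 2) ^ 2) by ring]
      exact h2
    exact h1.comp_hasFDerivAt x (hdta x hx).hasFDerivAt
  have hsnd2 : HasFDerivAt (fun y => (-((ta y) ^ 2)⁻¹) • fderiv ℝ ta y)
      ((-((ta x) ^ 2)⁻¹) • fderiv ℝ (fderiv ℝ ta) x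
        + ((2 * ta x / ((ta x) ^ 2) ^ 2) • fderiv ℝ ta x).smulRight (fderiv ℝ ta x)) x :=
    hphi.smul (hDta x hx).hasFDerivAt
  have hd2a : fderiv ℝ (fderiv ℝ a) x
      = (-((ta x) ^ 2)⁻¹) • fderiv ℝ (fderiv ℝ ta) x
        + ((2 * ta x / ((ta x) ^ 2) ^ 2) • fderiv ℝ ta x).smulRight (fderiv ℝ ta x) := by
    have he : fderiv ℝ a =ᶠ[nhds x] fun y => (-((ta y) ^ 2)⁻¹) • fderiv ℝ ta y :=
      Filter.eventuallyEq_of_mem (hs.mem_nhds hx) fun y hy => hfa' y hy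
    rw [he.fderiv_eq]; exact hsnd2.fderiv
  -- Laplacian of a at x
  have hLa : lap a x = (2 * ta x / ((ta x) ^ 2) ^ 2)
      * ∑ i, (fderiv ℝ ta x (EuclideanSpace.single i 1)) ^ 2 := by
    have hharm := htaharm x hx
    simp only [lap] at hharm ⊢
    calc (∑ i, fderiv ℝ (fderiv ℝ a) x (EuclideanSpace.single i 1) (EuclideanSpace.single i 1))
        = ∑ i, ((-((ta x) ^ 2)⁻¹)
              * fderiv ℝ (fderiv ℝ ta) x (EuclideanSpace.single i 1) (EuclideanSpace.single i 1)
            + (2 * ta x / ((ta x) ^ 2) ^ 2)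
              * (fderiv ℝ ta x (EuclideanSpace.single i 1)) ^ 2) := by
          refine Finset.sum_congr rfl fun i _ => ?_
          rw [hd2a]
          simp only [ContinuousLinearMap.add_apply, ContinuousLinearMap.coe_smul',
            Pi.smul_apply, ContinuousLinearMap.smul_apply,
            ContinuousLinearMap.smulRight_apply, smul_eq_mul]
          ring
      _ = (-((ta x) ^ 2)⁻¹)
            * ∑ i, fderiv ℝ (fderiv ℝ ta) x (EuclideanSpace.single i 1) (EuclideanSpace.single i 1)
          + (2 * ta x / ((ta x) ^ 2) ^ 2)
            * ∑ i, (fderiv ℝ ta x (EuclideanSpace.single i 1)) ^ 2 := by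
          rw [Finset.sum_add_distrib, Finset.mul_sum, Finset.mul_sum]
      _ = (2 * ta x / ((ta x) ^ 2) ^ 2)
            * ∑ i, (fderiv ℝ ta x (EuclideanSpace.single i 1)) ^ 2 := by
          rw [hharm]; ring
  -- first derivative of the spatial slice
  have hfL : ∀ y ∈ s, fderiv ℝ (fun z => a z * t ^ 2 + b z * t + c z) y
      = t ^ 2 • fderiv ℝ a y + t • fderiv ℝ b y + fderiv ℝ c y := fun y hy =>
    ((((hda y hy).hasFDerivAt.mul_const (t ^ 2)).add
      ((hdb y hy).hasFDerivAt.mul_const t)).add (hdc y hy).hasFDerivAt).fderiv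
  have hd2L : fderiv ℝ (fderiv ℝ (fun z => a z * t ^ 2 + b z * t + c z)) x
      = t ^ 2 • fderiv ℝ (fderiv ℝ a) x + t • fderiv ℝ (fderiv ℝ b) x
        + fderiv ℝ (fderiv ℝ c) x := by
    have he : fderiv ℝ (fun z => a z * t ^ 2 + b z * t + c z)
        =ᶠ[nhds x] fun y => t ^ 2 • fderiv ℝ a y + t • fderiv ℝ b y + fderiv ℝ c y :=
      Filter.eventuallyEq_of_mem (hs.mem_nhds hx) hfL
    rw [he.fderiv_eq,
      fderiv_fun_add (((hDa x hx).fun_const_smul (t ^ 2)).fun_add ((hDb x hx).fun_const_smul t)) (hDc x hx),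
      fderiv_fun_add ((hDa x hx).fun_const_smul (t ^ 2)) ((hDb x hx).fun_const_smul t),
      fderiv_fun_const_smul (hDa x hx), fderiv_fun_const_smul (hDb x hx)]
  have hlapL : lap (fun z => a z * t ^ 2 + b z * t + c z) x
      = t ^ 2 * lap a x + t * lap b x + lap c x := by
    simp only [lap, hd2L, ContinuousLinearMap.add_apply, ContinuousLinearMap.coe_smul',
      Pi.smul_apply, ContinuousLinearMap.smul_apply, smul_eq_mul,
      Finset.sum_add_distrib, Finset.mul_sum]
  -- time derivative of u
  have hut : ∀ (t' : ℝ), ∀ y ∈ s, fderiv ℝ u (t', y) (1, 0) = 2 * a y * t' + b y := by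
    intro t' y hy
    have h1 : HasFDerivAt (fun p : ℝ × (EuclideanSpace ℝ (Fin m)) => a p.2)
        ((fderiv ℝ a y).comp (ContinuousLinearMap.snd ℝ ℝ _)) (t', y) :=
      (hda y hy).hasFDerivAt.comp _ hasFDerivAt_snd
    have h2 : HasFDerivAt (fun p : ℝ × (EuclideanSpace ℝ (Fin m)) => p.1 ^ 2)
        (((2 : ℕ) * t' ^ 1) • ContinuousLinearMap.fst ℝ ℝ _) (t', y) :=
      by have := (hasDerivAt_pow 2 t').comp_hasFDerivAt (t', y) (hasFDerivAt_fst (𝕜 := ℝ) (p := (t', y))); exact this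
    have h3 : HasFDerivAt (fun p : ℝ × (EuclideanSpace ℝ (Fin m)) => b p.2)
        ((fderiv ℝ b y).comp (ContinuousLinearMap.snd ℝ ℝ _)) (t', y) :=
      (hdb y hy).hasFDerivAt.comp _ hasFDerivAt_snd
    have h4 : HasFDerivAt (fun p : ℝ × (EuclideanSpace ℝ (Fin m)) => p.1)
        (ContinuousLinearMap.fst ℝ ℝ _) (t', y) := hasFDerivAt_fst
    have h5 : HasFDerivAt (fun p : ℝ × (EuclideanSpace ℝ (Fin m)) => c p.2)
        ((fderiv ℝ c y).comp (ContinuousLinearMap.snd ℝ ℝ _)) (t', y) :=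
      (hdc y hy).hasFDerivAt.comp _ hasFDerivAt_snd
    have hto := ((h1.fun_mul h2).fun_add (h3.fun_mul h4)).fun_add h5
    rw [hu, hto.fderiv]
    simp only [ContinuousLinearMap.add_apply, ContinuousLinearMap.coe_smul',
      Pi.smul_apply, ContinuousLinearMap.smul_apply, ContinuousLinearMap.coe_comp',
      Function.comp_apply, ContinuousLinearMap.coe_fst', ContinuousLinearMap.coe_snd',
      map_zero, smul_eq_mul]
    ring
  -- second time derivative
  have hutt : fderiv ℝ (fun q => fderiv ℝ u q (1, 0)) (t, x) (1, 0) = 2 * a x := by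
    have hev : (fun q : ℝ × (EuclideanSpace ℝ (Fin m)) => fderiv ℝ u q (1, 0))
        =ᶠ[nhds (t, x)] fun q => 2 * a q.2 * q.1 + b q.2 :=
      Filter.eventuallyEq_of_mem ((isOpen_univ.prod hs).mem_nhds (Set.mk_mem_prod trivial hx))
        fun q hq => hut q.1 q.2 hq.2
    rw [hev.fderiv_eq]
    have h1 : HasFDerivAt (fun q : ℝ × (EuclideanSpace ℝ (Fin m)) => 2 * a q.2)
        ((2 : ℝ) • ((fderiv ℝ a x).comp (ContinuousLinearMap.snd ℝ ℝ _))) (t, x) :=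
      ((hda x hx).hasFDerivAt.comp _ hasFDerivAt_snd).const_mul 2
    have h4 : HasFDerivAt (fun q : ℝ × (EuclideanSpace ℝ (Fin m)) => q.1)
        (ContinuousLinearMap.fst ℝ ℝ _) (t, x) := hasFDerivAt_fst
    have h3 : HasFDerivAt (fun q : ℝ × (EuclideanSpace ℝ (Fin m)) => b q.2)
        ((fderiv ℝ b x).comp (ContinuousLinearMap.snd ℝ ℝ _)) (t, x) :=
      (hdb x hx).hasFDerivAt.comp _ hasFDerivAt_snd
    rw [((h1.fun_mul h4).fun_add h3).fderiv]
    simp only [ContinuousLinearMap.add_apply, ContinuousLinearMap.coe_smul',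
      Pi.smul_apply, ContinuousLinearMap.smul_apply, ContinuousLinearMap.coe_comp',
      Function.comp_apply, ContinuousLinearMap.coe_fst', ContinuousLinearMap.coe_snd',
      map_zero, smul_eq_mul]
    ring
  -- the gradient term
  have hwt : HasFDerivAt (fun y => 2 * a y * t + b y)
      ((2 * t) • fderiv ℝ a x + fderiv ℝ b x) x := by
    have heq : (fun y => 2 * a y * t + b y) = fun y => a y * (2 * t) + b y := by
      funext y; ring
    rw [heq]
    exact ((hda x hx).hasFDerivAt.mul_const (2 * t)).add (hdb x hx).hasFDerivAt
  have hnormsq : ‖gradient (fun y => fderiv ℝ u (t, y) (1, 0)) x‖ ^ 2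
      = ∑ i, (2 * t * fderiv ℝ a x (EuclideanSpace.single i 1)
          + fderiv ℝ b x (EuclideanSpace.single i 1)) ^ 2 := by
    have hgr : gradient (fun y => fderiv ℝ u (t, y) (1, 0)) x
        = gradient (fun y => 2 * a y * t + b y) x :=
      Filter.EventuallyEq.gradient_eq
        (Filter.eventuallyEq_of_mem (hs.mem_nhds hx) fun y hy => hut t y hy)
    rw [hgr, norm_sq_coords]
    refine Finset.sum_congr rfl fun i _ => ?_
    congr 1
    rw [inner_grad, hwt.fderiv]
    simp only [ContinuousLinearMap.add_apply, ContinuousLinearMap.coe_smul',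
      Pi.smul_apply, ContinuousLinearMap.smul_apply, smul_eq_mul]
  -- Parseval identities
  have hinab : (⟪gradient a x, gradient b x⟫ : ℝ)
      = ∑ i, fderiv ℝ a x (EuclideanSpace.single i 1)
          * fderiv ℝ b x (EuclideanSpace.single i 1) := by
    rw [inner_sum_coords]
    exact Finset.sum_congr rfl fun i _ => by rw [inner_grad, inner_grad]
  have hnb : ‖gradient b x‖ ^ 2 = ∑ i, (fderiv ℝ b x (EuclideanSpace.single i 1)) ^ 2 := by
    rw [norm_sq_coords]
    exact Finset.sum_congr rfl fun i _ => by rw [inner_grad]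
  have hPa : ∀ i, fderiv ℝ a x (EuclideanSpace.single i 1)
      = -((ta x) ^ 2)⁻¹ * fderiv ℝ ta x (EuclideanSpace.single i 1) := by
    intro i
    rw [hfa' x hx]
    simp only [ContinuousLinearMap.coe_smul', Pi.smul_apply, smul_eq_mul]
  -- expand the gradient sum
  have hsum : ∑ i, (2 * t * fderiv ℝ a x (EuclideanSpace.single i 1)
          + fderiv ℝ b x (EuclideanSpace.single i 1)) ^ 2
      = 4 * t ^ 2 * (((ta x) ^ 2)⁻¹) ^ 2
            * ∑ i, (fderiv ℝ ta x (EuclideanSpace.single i 1)) ^ 2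
        + 4 * t * ∑ i, fderiv ℝ a x (EuclideanSpace.single i 1)
            * fderiv ℝ b x (EuclideanSpace.single i 1)
        + ∑ i, (fderiv ℝ b x (EuclideanSpace.single i 1)) ^ 2 := by
    have h1 : ∀ i ∈ Finset.univ, (2 * t * fderiv ℝ a x (EuclideanSpace.single i 1)
          + fderiv ℝ b x (EuclideanSpace.single i 1)) ^ 2
        = 4 * t ^ 2 * (((ta x) ^ 2)⁻¹) ^ 2
              * (fderiv ℝ ta x (EuclideanSpace.single i 1)) ^ 2
          + 4 * t * (fderiv ℝ a x (EuclideanSpace.single i 1)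
              * fderiv ℝ b x (EuclideanSpace.single i 1))
          + (fderiv ℝ b x (EuclideanSpace.single i 1)) ^ 2 := by
      intro i _
      rw [hPa i]
      ring
    rw [Finset.sum_congr rfl h1, Finset.sum_add_distrib, Finset.sum_add_distrib,
      ← Finset.mul_sum, ← Finset.mul_sum]
  have hax : a x = (ta x)⁻¹ := by simp only [haa]; rw [one_div]
  -- facts from the hypotheses
  have E1 := hbeq x hx
  have E2 := hceq x hx
  rw [hinab, hax] at E1
  rw [hnb, hax] at E2
  have hLb : lap b x = 2 * ta x * ∑ i, fderiv ℝ a x (EuclideanSpace.single i 1)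
      * fderiv ℝ b x (EuclideanSpace.single i 1) := by
    field_simp at E1
    linear_combination E1
  have hLc : lap c x = ta x * ((∑ i, (fderiv ℝ b x (EuclideanSpace.single i 1)) ^ 2) + 1) / 2 := by
    field_simp at E2
    linear_combination E2 / 2
  -- put everything together
  show fderiv ℝ (fun q => fderiv ℝ u q (1, 0)) (t, x) (1, 0) * lap (fun y => u (t, y)) x
      - ‖gradient (fun y => fderiv ℝ u (t, y) (1, 0)) x‖ ^ 2 = 1
  have hslice : (fun y => u (t, y)) = fun z => a z * t ^ 2 + b z * t + c z := by
    funext y; rw [hu]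
  rw [hutt, hslice, hlapL, hnormsq, hsum, hLa, hLb, hLc, hax]
  field_simp
  ring
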